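/- For the sequence x̄ = (x_1,x_2,...) ∈ ([0,1]²)^ℕ constructed from the triangle data, and for every continuous function f : [0,1]² → [0,1], the sequence (f(x_1),f(x_2),...) ∈ [0,1]^ℕ is minimal. -/

import Mathlib

/-!
Write `F = f × f × f` and `c = F ((0,0),(1,0),(0,1))`. The value sequence is the flattening of
the triple sequence `c, F b₁, F b₂, …`, and an initial block of length `< 2 ^ K` of that sequence
reappears at every position `2 ^ i · (odd)` with `i ≥ K`, except that its head `c` is replaced
by `F vᵢ`. By the intermediate value theorem one vertex value of `f` is attained on the opposite
side of the triangle, and density of the corresponding `Aⱼ` gives infinitely many `i` with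
`F vᵢ` close to `c`. Hence the sequence is uniformly recurrent, and uniformly recurrent
sequences are minimal.
-/

open Set unitInterval

/-- The left shift `S` on sequences: `S(x₁,x₂,x₃,…) = (x₂,x₃,…)`. -/
def shiftSeq {X : Type*} (z : ℕ → X) : ℕ → X := fun n => z (n + 1)

/-- The closure of the forward shift-orbit `{z, Sz, S²z, …}` of a sequence `z`,
inside the sequence space `ℕ → X`.  (For a compact metric space `X` the product
topology on `ℕ → X` is exactly the topology of the metric
`d̄(x̄,ȳ) = ∑ᵢ d(xᵢ,yᵢ)/2ⁱ`.) -/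
def shiftOrbitClosure {X : Type*} [TopologicalSpace X] (z : ℕ → X) : Set (ℕ → X) :=
  closure (Set.range fun k => shiftSeq^[k] z)

/-- A sequence `z` is *minimal* if the closure of its shift-orbit is a minimal
dynamical system under the shift, i.e. every point of this closure has dense
forward orbit in it. -/
def IsMinimalSeq {X : Type*} [TopologicalSpace X] (z : ℕ → X) : Prop :=
  ∀ w ∈ shiftOrbitClosure z, shiftOrbitClosure z ⊆ shiftOrbitClosure w

/-- The 2-Toeplitz sequence of `B = (b 0, b 1, …)` (all sequences 0-indexed):
its `n`-th term is `b p` where `2 ^ p` exactly divides `n + 1`; equivalently the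
term at (1-indexed) position `j` is `b_i` for all `j ≡ 2^(i-1) (mod 2^i)`. -/
def toeplitz2 {X : Type*} (b : ℕ → X) : ℕ → X :=
  fun n => b (padicValNat 2 (n + 1))

noncomputable section

/-- The plane with the Euclidean metric. -/
abbrev E2 := EuclideanSpace ℝ (Fin 2)

def p00 : E2 := !₂[0, 0]
def p10 : E2 := !₂[1, 0]
def p01 : E2 := !₂[0, 1]

/-- Flatten a sequence of triples into a sequence, each triple contributing
three consecutive terms. -/
def flattenTriples {Y : Type*} (b : ℕ → Y × Y × Y) : ℕ → Y := fun n =>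
  if n % 3 = 0 then (b (n / 3)).1
  else if n % 3 = 1 then (b (n / 3)).2.1
  else (b (n / 3)).2.2

/-- The sequence `x̄ = ((0,0),(1,0),(0,1)) ∗ b̄` where `b̄` is the 2-Toeplitz
sequence associated with `v`, each triple of `b̄` contributing three consecutive
terms of `x̄`. -/
def triSeq (v : ℕ → E2 × E2 × E2) : ℕ → E2 := fun n =>
  if n = 0 then p00 else if n = 1 then p10 else if n = 2 then p01
  else flattenTriples (toeplitz2 v) (n - 3)

/-- The unit square `[0,1]² ⊆ ℝ²`. -/
def unitSq : Set E2 := {p | p 0 ∈ Set.Icc (0 : ℝ) 1 ∧ p 1 ∈ Set.Icc (0 : ℝ) 1}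

open Filter Topology

section Shift

variable {X : Type*}

theorem shiftSeq_iterate_apply (z : ℕ → X) (k n : ℕ) : shiftSeq^[k] z n = z (k + n) := by
  induction k generalizing z with
  | zero => simp
  | succ k ih => rw [Function.iterate_succ_apply, ih, shiftSeq, add_right_comm, add_assoc]

variable [TopologicalSpace X]

theorem continuous_shiftSeq : Continuous (shiftSeq (X := X)) :=
  continuous_pi fun n => continuous_apply (n + 1)

theorem mapsTo_shiftSeq_shiftOrbitClosure (z : ℕ → X) :
    MapsTo shiftSeq (shiftOrbitClosure z) (shiftOrbitClosure z) := by
  refine MapsTo.closure ?_ continuous_shiftSeq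
  rintro _ ⟨k, rfl⟩
  exact ⟨k + 1, Function.iterate_succ_apply' _ _ _⟩

theorem shiftOrbitClosure_subset_of_mem {z w : ℕ → X} (h : z ∈ shiftOrbitClosure w) :
    shiftOrbitClosure z ⊆ shiftOrbitClosure w :=
  closure_minimal (range_subset_iff.2 fun k => (mapsTo_shiftSeq_shiftOrbitClosure w).iterate k h)
    isClosed_closure

end Shift

def IsUniformlyRecurrent {X : Type*} [PseudoMetricSpace X] (z : ℕ → X) : Prop :=
  ∀ ε > 0, ∀ N : ℕ, ∃ L : ℕ, ∀ k : ℕ, ∃ m ∈ Icc k (k + L), ∀ i ≤ N, dist (z (m + i)) (z i) < ε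

theorem mem_shiftOrbitClosure_of_forall_dist_le {X : Type*} [PseudoMetricSpace X] {z w : ℕ → X}
    (h : ∀ ε > 0, ∀ N : ℕ, ∃ t, ∀ i ≤ N, dist (w (t + i)) (z i) ≤ ε) :
    z ∈ shiftOrbitClosure w := by
  choose t ht using fun n : ℕ => h (1 / (n + 1)) Nat.one_div_pos_of_nat n
  have htend : Tendsto (fun n => shiftSeq^[t n] w) atTop (𝓝 z) := by
    refine tendsto_pi_nhds.2 fun i => tendsto_iff_dist_tendsto_zero.2 ?_
    refine squeeze_zero' (Eventually.of_forall fun n => dist_nonneg) ?_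
      tendsto_one_div_add_atTop_nhds_zero_nat
    filter_upwards [eventually_ge_atTop i] with n hn
    rw [shiftSeq_iterate_apply]
    exact ht n i hn
  exact mem_closure_of_tendsto htend (Eventually.of_forall fun n => ⟨t n, rfl⟩)

namespace IsUniformlyRecurrent

variable {X : Type*} [PseudoMetricSpace X] {z : ℕ → X}

theorem exists_dist_le_of_mem_shiftOrbitClosure (hz : IsUniformlyRecurrent z) {w : ℕ → X}
    (hw : w ∈ shiftOrbitClosure z) {ε : ℝ} (hε : 0 < ε) (N : ℕ) :
    ∃ t, ∀ i ≤ N, dist (w (t + i)) (z i) ≤ ε := by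
  obtain ⟨L, hL⟩ := hz ε hε N
  -- the shifts of `z` lie in this closed set, hence so does `w`
  let D : Set (ℕ → X) :=
    ⋃ t ∈ Finset.range (L + 1), ⋂ i ∈ Finset.range (N + 1), {y | dist (y (t + i)) (z i) ≤ ε}
  have hD : IsClosed D :=
    (Finset.range (L + 1)).finite_toSet.isClosed_biUnion fun t _ => isClosed_biInter fun i _ =>
      isClosed_le ((continuous_apply _).dist continuous_const) continuous_const
  have horbit : range (fun k => shiftSeq^[k] z) ⊆ D := by
    rintro _ ⟨k, rfl⟩
    obtain ⟨m, ⟨hkm, hmk⟩, hm⟩ := hL k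
    simp only [D, mem_iUnion, mem_iInter, Finset.mem_range, mem_ofPred_eq, shiftSeq_iterate_apply]
    refine ⟨m - k, by omega, fun i hi => ?_⟩
    rw [← add_assoc, Nat.add_sub_cancel' hkm]
    exact (hm i (by omega)).le
  have hwD := closure_minimal horbit hD hw
  simp only [D, mem_iUnion, mem_iInter, Finset.mem_range, mem_ofPred_eq] at hwD
  obtain ⟨t, -, ht⟩ := hwD
  exact ⟨t, fun i hi => ht i (by omega)⟩

theorem isMinimalSeq (hz : IsUniformlyRecurrent z) : IsMinimalSeq z := fun _ hw =>
  shiftOrbitClosure_subset_of_mem <| mem_shiftOrbitClosure_of_forall_dist_le fun _ hε N =>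
    hz.exists_dist_le_of_mem_shiftOrbitClosure hw hε N

end IsUniformlyRecurrent

theorem padicValNat_add_of_lt_pow {p : ℕ} [Fact p.Prime] {a m K : ℕ} (ha : 0 < a)
    (haK : a < p ^ K) (hm : p ^ K ∣ m) : padicValNat p (a + m) = padicValNat p a := by
  rcases eq_or_ne m 0 with rfl | hm0
  · rw [add_zero]
  have hlt : padicValNat p a < padicValNat p m := by
    have h1 : p ^ padicValNat p a < p ^ K := (Nat.le_of_dvd ha pow_padicValNat_dvd).trans_lt haK
    have h2 : K ≤ padicValNat p m := (padicValNat_dvd_iff_le hm0).1 hm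
    have := (Nat.pow_lt_pow_iff_right (Fact.out : p.Prime).one_lt).1 h1
    omega
  have := padicValRat.add_eq_of_lt (p := p) (q := a) (r := m) (by positivity) (by positivity)
    (by exact_mod_cast hm0) (by rw [padicValRat.of_nat, padicValRat.of_nat]; exact_mod_cast hlt)
  rw [← Nat.cast_add, padicValRat.of_nat, padicValRat.of_nat] at this
  exact_mod_cast this

/-- The triple sequence `c ∗ b̄` of the paper: `toeplitzCons c w (q + 1) = toeplitz2 w q`. -/
def toeplitzCons {Y : Type*} (c : Y) (w : ℕ → Y) : ℕ → Y :=
  fun q => if q = 0 then c else w (padicValNat 2 q)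

theorem comp_toeplitzCons {Y Z : Type*} (g : Y → Z) (c : Y) (w : ℕ → Y) :
    g ∘ toeplitzCons c w = toeplitzCons (g c) (g ∘ w) := by
  funext q
  simp only [toeplitzCons, Function.comp_apply, apply_ite g]

theorem isUniformlyRecurrent_toeplitzCons {Y : Type*} [PseudoMetricSpace Y] {c : Y} {w : ℕ → Y}
    (hc : MapClusterPt c atTop w) : IsUniformlyRecurrent (toeplitzCons c w) := by
  intro ε hε N
  obtain ⟨i, hNi, hi⟩ := frequently_atTop.1
    (mapClusterPt_iff_frequently.1 hc _ (Metric.ball_mem_nhds c hε)) N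
  -- the block recurs at every position `2 ^ i * odd`, with `w i` in place of its head `c`
  refine ⟨2 ^ (i + 2), fun k => ⟨2 ^ i * (2 * (k / 2 ^ (i + 1) + 1) + 1), ?_, fun j hj => ?_⟩⟩
  · have hlo := Nat.lt_div_mul_add (a := k) (pow_pos two_pos (i + 1))
    have hhi := Nat.div_mul_le_self k (2 ^ (i + 1))
    rw [show 2 ^ (i + 2) = 2 ^ (i + 1) * 2 by ring, pow_succ] at *
    constructor <;> linarith
  rcases eq_or_ne j 0 with rfl | hj0
  · have hval : padicValNat 2 (2 ^ i * (2 * (k / 2 ^ (i + 1) + 1) + 1)) = i := by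
      rw [padicValNat.mul (by positivity) (by omega), padicValNat.prime_pow,
        padicValNat.eq_zero_of_not_dvd (by omega), add_zero]
    simpa [toeplitzCons, hval] using hi
  · have hji : j < 2 ^ i := (hj.trans hNi).trans_lt i.lt_two_pow_self
    rw [toeplitzCons, toeplitzCons, if_neg (by omega), if_neg hj0, add_comm,
      padicValNat_add_of_lt_pow (by omega) hji (dvd_mul_right _ _), dist_self]
    exact hε

section Flatten

variable {Y : Type*}

theorem flattenTriples_three_mul_add (b : ℕ → Y × Y × Y) (m n : ℕ) :
    flattenTriples b (3 * m + n) = flattenTriples (fun q => b (m + q)) n := by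
  simp only [flattenTriples, Nat.mul_add_mod, Nat.mul_add_div three_pos]

theorem comp_flattenTriples {Z : Type*} (g : Y → Z) (b : ℕ → Y × Y × Y) :
    g ∘ flattenTriples b = flattenTriples (Prod.map g (Prod.map g g) ∘ b) := by
  funext n
  simp only [flattenTriples, Function.comp_apply, apply_ite g, Prod.map_fst, Prod.map_snd]

theorem dist_flattenTriples_le [PseudoMetricSpace Y] (b b' : ℕ → Y × Y × Y) (n : ℕ) :
    dist (flattenTriples b n) (flattenTriples b' n) ≤ dist (b (n / 3)) (b' (n / 3)) := by
  simp only [flattenTriples, Prod.dist_eq]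
  split_ifs <;> simp

theorem IsUniformlyRecurrent.flattenTriples [PseudoMetricSpace Y] {b : ℕ → Y × Y × Y}
    (hb : IsUniformlyRecurrent b) : IsUniformlyRecurrent (flattenTriples b) := by
  intro ε hε N
  obtain ⟨L, hL⟩ := hb ε hε (N / 3)
  refine ⟨3 * L + 2, fun k => ?_⟩
  obtain ⟨m, ⟨hkm, hmk⟩, hm⟩ := hL ((k + 2) / 3)
  refine ⟨3 * m, ⟨by omega, by omega⟩, fun i hi => ?_⟩
  rw [flattenTriples_three_mul_add]
  exact (dist_flattenTriples_le _ _ i).trans_lt (hm _ (Nat.div_le_div_right hi))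

end Flatten

theorem triSeq_eq_flattenTriples (v : ℕ → E2 × E2 × E2) :
    triSeq v = flattenTriples (toeplitzCons (p00, p10, p01) v) := by
  funext n
  rcases lt_or_ge n 3 with hn | hn
  · interval_cases n <;> rfl
  · obtain ⟨n, rfl⟩ := Nat.exists_eq_add_of_le hn
    rw [triSeq, if_neg (by omega), if_neg (by omega), if_neg (by omega), Nat.add_sub_cancel_left,
      show 3 + n = 3 * 1 + n by rfl, flattenTriples_three_mul_add]
    congr 1
    funext q
    simp [toeplitzCons, toeplitz2, add_comm]

theorem IsPreconnected.infinite_inter_of_isOpen {X : Type*} [TopologicalSpace X] [T1Space X]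
    {s u : Set X} (hs : IsPreconnected s) (hs' : s.Nontrivial) (hu : IsOpen u)
    (hsu : (s ∩ u).Nonempty) : (s ∩ u).Infinite := by
  intro hfin
  obtain hsub | hsub := isPreconnected_iff_subset_of_disjoint.1 hs u (s ∩ u)ᶜ hu
    hfin.isClosed.isOpen_compl (fun x hx => by by_cases x ∈ u <;> simp_all) (by ext; simp; tauto)
  · exact hs.infinite_of_nontrivial hs' (hfin.subset fun x hx => ⟨hx, hsub hx⟩)
  · obtain ⟨x, hx⟩ := hsu
    exact hsub hx.1 hx

theorem IsPreconnected.infinite_setOf_dist_lt {X : Type*} [TopologicalSpace X] [T1Space X]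
    {s A : Set X} (hs : IsPreconnected s) {a b : X} (ha : a ∈ s) (hb : b ∈ s) (hab : a ≠ b)
    (hAs : A ⊆ s) (hsA : s ⊆ closure A) {f : X → ℝ} (hf : ContinuousOn f s) {t : ℝ}
    (ht : t ∈ uIcc (f a) (f b)) {ε : ℝ} (hε : 0 < ε) :
    {x ∈ A | dist (f x) t < ε}.Infinite := by
  obtain ⟨x, hxs, hxt⟩ : t ∈ f '' s := by
    rcases mem_uIcc.1 ht with ht | ht
    exacts [hs.intermediate_value ha hb hf ht, hs.intermediate_value hb ha hf ht]
  obtain ⟨u, hu, hfu⟩ := continuousOn_iff'.1 hf _ (Metric.isOpen_ball (x := t) (ε := ε))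
  have hsu : (s ∩ u).Infinite := hs.infinite_inter_of_isOpen ⟨a, ha, b, hb, hab⟩ hu
    ⟨x, hxs, (hfu.subset ⟨by simpa [hxt] using hε, hxs⟩).1⟩
  have hAu : (A ∩ u).Infinite := by
    refine fun hfin => hsu (hfin.subset ?_)
    calc s ∩ u ⊆ u ∩ closure A := fun y hy => ⟨hy.2, hsA hy.1⟩
      _ ⊆ closure (u ∩ A) := hu.inter_closure
      _ = A ∩ u := by rw [inter_comm, hfin.isClosed.closure_eq]
  refine hAu.mono fun y hy => ⟨hy.1, ?_⟩
  exact (hfu.symm.subset ⟨hy.2, hAs hy.1⟩).1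

theorem mem_uIcc_or_mem_uIcc_or_mem_uIcc {α : Type*} [LinearOrder α] (x y z : α) :
    x ∈ uIcc y z ∨ y ∈ uIcc x z ∨ z ∈ uIcc x y := by
  simp only [mem_uIcc]
  rcases le_total x y with h1 | h1 <;> rcases le_total y z with h2 | h2 <;>
    rcases le_total x z with h3 | h3 <;> tauto

theorem convex_unitSq : Convex ℝ unitSq := by
  intro x hx y hy a b ha hb hab
  exact ⟨by simpa using convex_Icc (0 : ℝ) 1 hx.1 hy.1 ha hb hab,
    by simpa using convex_Icc (0 : ℝ) 1 hx.2 hy.2 ha hb hab⟩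

theorem p00_mem_unitSq : p00 ∈ unitSq := by simp [unitSq, p00]
theorem p10_mem_unitSq : p10 ∈ unitSq := by simp [unitSq, p10]
theorem p01_mem_unitSq : p01 ∈ unitSq := by simp [unitSq, p01]

theorem p00_ne_p10 : p00 ≠ p10 := fun h => by simpa [p00, p10] using congrArg (· 0) h
theorem p00_ne_p01 : p00 ≠ p01 := fun h => by simpa [p00, p01] using congrArg (· 1) h
theorem p10_ne_p01 : p10 ≠ p01 := fun h => by simpa [p10, p01] using congrArg (· 0) h

theorem infinite_setOf_dist_lt_of_segment_subset_closure {f : E2 → ℝ}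
    (hf : ContinuousOn f unitSq) {A : Set E2} {P Q : E2} (hPQ : P ≠ Q) (hP : P ∈ unitSq)
    (hQ : Q ∈ unitSq) (hAs : A ⊆ segment ℝ P Q) (hAd : segment ℝ P Q ⊆ closure A) {t : ℝ}
    (ht : t ∈ uIcc (f P) (f Q)) {ε : ℝ} (hε : 0 < ε) : {a ∈ A | dist (f a) t < ε}.Infinite :=
  (convex_segment P Q).isPreconnected.infinite_setOf_dist_lt (left_mem_segment ℝ P Q)
    (right_mem_segment ℝ P Q) hPQ hAs hAd (hf.mono (convex_unitSq.segment_subset hP hQ)) ht hε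

theorem Set.Infinite.frequently_atTop_mem {α : Type*} {v : ℕ → α} {P : Set α}
    (hP : P.Infinite) (hPv : P ⊆ range v) : ∃ᶠ i in atTop, v i ∈ P :=
  Nat.frequently_atTop_iff_infinite.2 (hP.preimage hPv)

theorem mapClusterPt_vertexValues {A1 A2 A3 : Set E2}
    (hA1s : A1 ⊆ segment ℝ p10 p01) (hA1d : segment ℝ p10 p01 ⊆ closure A1)
    (hA2s : A2 ⊆ segment ℝ p00 p01) (hA2d : segment ℝ p00 p01 ⊆ closure A2)
    (hA3s : A3 ⊆ segment ℝ p00 p10) (hA3d : segment ℝ p00 p10 ⊆ closure A3)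
    {v : ℕ → E2 × E2 × E2}
    (hvr : range v =
      (A1 ×ˢ (({p10} : Set E2) ×ˢ ({p01} : Set E2))) ∪
      (({p00} : Set E2) ×ˢ (A2 ×ˢ ({p01} : Set E2))) ∪
      (({p00} : Set E2) ×ˢ (({p10} : Set E2) ×ˢ A3)))
    {f : E2 → ℝ} (hf : ContinuousOn f unitSq) :
    MapClusterPt (Prod.map f (Prod.map f f) (p00, p10, p01)) atTop
      (Prod.map f (Prod.map f f) ∘ v) := by
  refine mapClusterPt_iff_frequently.2 fun s hs => ?_
  obtain ⟨ε, hε, hball⟩ := Metric.mem_nhds_iff.1 hs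
  refine Frequently.mono ?_ fun i hi => hball hi
  -- one vertex value lies between the other two, so it is approximated on the opposite side
  rcases mem_uIcc_or_mem_uIcc_or_mem_uIcc (f p00) (f p10) (f p01) with h | h | h
  · have hinf := (infinite_setOf_dist_lt_of_segment_subset_closure hf p10_ne_p01 p10_mem_unitSq
      p01_mem_unitSq hA1s hA1d h hε).image (f := fun a => (a, p10, p01))
      fun a _ b _ hab => congrArg Prod.fst hab
    refine (hinf.frequently_atTop_mem (v := v) ?_).mono ?_
    · rintro _ ⟨a, ha, rfl⟩
      exact hvr ▸ Or.inl (Or.inl ⟨ha.1, rfl, rfl⟩)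
    · rintro i ⟨a, ha, hai⟩
      simpa [← hai, Prod.dist_eq] using ha.2
  · have hinf := (infinite_setOf_dist_lt_of_segment_subset_closure hf p00_ne_p01 p00_mem_unitSq
      p01_mem_unitSq hA2s hA2d h hε).image (f := fun a => (p00, a, p01))
      fun a _ b _ hab => congrArg (·.2.1) hab
    refine (hinf.frequently_atTop_mem (v := v) ?_).mono ?_
    · rintro _ ⟨a, ha, rfl⟩
      exact hvr ▸ Or.inl (Or.inr ⟨rfl, ha.1, rfl⟩)
    · rintro i ⟨a, ha, hai⟩
      simpa [← hai, Prod.dist_eq] using ha.2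
  · have hinf := (infinite_setOf_dist_lt_of_segment_subset_closure hf p00_ne_p10 p00_mem_unitSq
      p10_mem_unitSq hA3s hA3d h hε).image (f := fun a => (p00, p10, a))
      fun a _ b _ hab => congrArg (·.2.2) hab
    refine (hinf.frequently_atTop_mem (v := v) ?_).mono ?_
    · rintro _ ⟨a, ha, rfl⟩
      exact hvr ▸ Or.inr ⟨rfl, rfl, ha.1⟩
    · rintro i ⟨a, ha, hai⟩
      simpa [← hai, Prod.dist_eq] using ha.2

theorem continuous_image_of_triSeq_isMinimalSeq_general
    (A1 A2 A3 : Set E2)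
    (hA1s : A1 ⊆ segment ℝ p10 p01)
    (hA1d : segment ℝ p10 p01 ⊆ closure A1)
    (hA2s : A2 ⊆ segment ℝ p00 p01)
    (hA2d : segment ℝ p00 p01 ⊆ closure A2)
    (hA3s : A3 ⊆ segment ℝ p00 p10)
    (hA3d : segment ℝ p00 p10 ⊆ closure A3)
    (v : ℕ → E2 × E2 × E2)
    (hvr : Set.range v =
      (A1 ×ˢ (({p10} : Set E2) ×ˢ ({p01} : Set E2))) ∪
      (({p00} : Set E2) ×ˢ (A2 ×ˢ ({p01} : Set E2))) ∪
      (({p00} : Set E2) ×ˢ (({p10} : Set E2) ×ˢ A3)))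
    (f : E2 → ℝ) (hf : ContinuousOn f unitSq) :
    IsMinimalSeq (fun n => f (triSeq v n)) := by
  let F := Prod.map f (Prod.map f f)
  have hseq : (fun n => f (triSeq v n)) =
      flattenTriples (toeplitzCons (F (p00, p10, p01)) (F ∘ v)) := by
    rw [← comp_toeplitzCons, ← comp_flattenTriples, ← triSeq_eq_flattenTriples]
    rfl
  rw [hseq]
  exact (isUniformlyRecurrent_toeplitzCons
    (mapClusterPt_vertexValues hA1s hA1d hA2s hA2d hA3s hA3d hvr hf)).flattenTriples.isMinimalSeq

/-- For the sequence `x̄` built from the triangle data and every continuous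
`f : [0,1]² → [0,1]`, the sequence `(f x₁, f x₂, …)` is minimal.  Here `A₁, A₂, A₃`
are countable dense subsets of the segments `[(1,0),(0,1)]`, `[(0,0),(0,1)]`,
`[(0,0),(1,0)]` respectively, and `v` is an enumeration of
`(A₁×{(1,0)}×{(0,1)}) ∪ ({(0,0)}×A₂×{(0,1)}) ∪ ({(0,0)}×{(1,0)}×A₃)`. -/
theorem continuous_image_of_triSeq_isMinimalSeq
    (A1 A2 A3 : Set E2)
    (hA1s : A1 ⊆ segment ℝ p10 p01) (hA1c : A1.Countable)
    (hA1d : segment ℝ p10 p01 ⊆ closure A1)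
    (hA2s : A2 ⊆ segment ℝ p00 p01) (hA2c : A2.Countable)
    (hA2d : segment ℝ p00 p01 ⊆ closure A2)
    (hA3s : A3 ⊆ segment ℝ p00 p10) (hA3c : A3.Countable)
    (hA3d : segment ℝ p00 p10 ⊆ closure A3)
    (v : ℕ → E2 × E2 × E2) (hvinj : Function.Injective v)
    (hvr : Set.range v =
      (A1 ×ˢ (({p10} : Set E2) ×ˢ ({p01} : Set E2))) ∪
      (({p00} : Set E2) ×ˢ (A2 ×ˢ ({p01} : Set E2))) ∪
      (({p00} : Set E2) ×ˢ (({p10} : Set E2) ×ˢ A3)))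
    (f : E2 → ℝ) (hf : ContinuousOn f unitSq)
    (hmaps : Set.MapsTo f unitSq (Set.Icc (0 : ℝ) 1)) :
    IsMinimalSeq (fun n => f (triSeq v n)) :=
  continuous_image_of_triSeq_isMinimalSeq_general A1 A2 A3 hA1s hA1d hA2s hA2d hA3s hA3d v hvr f hf

end
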